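/- Let N ≥ 1 and s ∈ ℕ, s ≥ 1. Let (μ_n) be a sequence of Borel probability measures on ℝ^N, each with finite absolute moments up to order s, such that for every multi-index β with |β| ≤ s the moment ∫ v^β dμ_n(v) = M_β is the same for all n. Let μ be a Borel probability measure on ℝ^N with finite absolute moments up to order s such that d_s(μ_n, μ) → 0 as n → ∞. Then ∫ v^β dμ(v) = M_β for every multi-index β with |β| ≤ s. -/

import Mathlib

open MeasureTheory Filter Topology ENNReal

noncomputable def charFun' {N : ℕ} (μ : Measure (EuclideanSpace ℝ (Fin N)))
    (x : EuclideanSpace ℝ (Fin N)) : ℂ :=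
  ∫ v, Complex.exp (-(((inner ℝ x v : ℝ) : ℂ) * Complex.I)) ∂μ

noncomputable def dFourier {N : ℕ} (s : ℝ)
    (μ ν : Measure (EuclideanSpace ℝ (Fin N))) : ℝ≥0∞ :=
  ⨆ (x : EuclideanSpace ℝ (Fin N)) (_ : x ≠ 0),
    ENNReal.ofReal (‖charFun' μ x - charFun' ν x‖ / ‖x‖ ^ s)

/-!
Fix a direction `x` and push every measure forward along `v ↦ ⟪x, v⟫`. On `ℝ`, the Taylor
polynomial of order `s` of a characteristic function at `0` has the moments `∫ y ^ k` as its
coefficients. The `μ n` share their mixed moments, hence (multinomial expansion) these directional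
moments, so the Taylor polynomials of `φ_{μlim}` and `φ_{μ n}` differ by one fixed polynomial of
degree `≤ s`, which is `≤ d_s(μ n, μlim) |t| ^ s + o(t ^ s)` for every `n`; letting `n → ∞`, it is
`o(t ^ s)`, hence zero. Thus `μlim` and `μ 0` have the same directional moments `∫ ⟪x, v⟫ ^ k`
for `k ≤ s`. These are the values at `x` of the polynomials
`∑_{|β| = k} multinomial β (∫ v ^ β) X ^ β`, so the mixed moments agree as well.
-/

open Asymptotics Finset Complex
open scoped Nat RealInnerProductSpace

lemma Asymptotics.isLittleO_of_norm_sub_le_of_tendsto {α E F : Type*}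
    [SeminormedAddCommGroup E] [SeminormedAddCommGroup F] {l : Filter α} {f : α → E}
    {g : α → F} {f' : ℕ → α → E} {ε : ℕ → ℝ} (hf' : ∀ n, f' n =o[l] g)
    (hε : Tendsto ε atTop (𝓝 0))
    (hclose : ∀ᶠ n in atTop, ∀ᶠ x in l, ‖f x - f' n x‖ ≤ ε n * ‖g x‖) : f =o[l] g := by
  refine isLittleO_iff.2 fun c hc => ?_
  obtain ⟨n, hn, hεn⟩ := (hclose.and (hε.eventually (Iic_mem_nhds (half_pos hc)))).exists
  filter_upwards [hn, (hf' n).def (half_pos hc)] with x hx hx'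
  calc ‖f x‖ ≤ ‖f x - f' n x‖ + ‖f' n x‖ := norm_le_norm_sub_add _ _
    _ ≤ ε n * ‖g x‖ + c / 2 * ‖g x‖ := add_le_add hx hx'
    _ ≤ c / 2 * ‖g x‖ + c / 2 * ‖g x‖ := by gcongr
    _ = c * ‖g x‖ := by ring

lemma eq_zero_of_sum_pow_smul_isLittleO {E : Type*} [NormedAddCommGroup E] [NormedSpace ℝ E]
    {s : ℕ} {c : ℕ → E}
    (h : (fun t : ℝ => ∑ k ∈ range (s + 1), t ^ k • c k) =o[𝓝[≠] 0] fun t => t ^ s) :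
    ∀ k ≤ s, c k = 0 := by
  induction s generalizing c with
  | zero =>
    simp only [zero_add, range_one, sum_singleton, pow_zero, one_smul] at h
    simpa using isLittleO_const_const_iff.1 h
  | succ s ih =>
    have hc0 : c 0 = 0 := by
      have hcont : Continuous fun t : ℝ => ∑ k ∈ range (s + 2), t ^ k • c k := by fun_prop
      refine tendsto_nhds_unique ?_ (h.trans_tendsto ?_)
      · simpa [sum_range_succ' _ (s + 1)] using (hcont.tendsto 0).mono_left nhdsWithin_le_nhds
      · exact ((continuous_pow (s + 1)).tendsto' 0 0 (by simp)).mono_left nhdsWithin_le_nhds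
    have hshift : (fun t : ℝ => ∑ k ∈ range (s + 1), t ^ k • c (k + 1)) =o[𝓝[≠] 0]
        fun t => t ^ s := by
      refine ((isBigO_refl (fun t : ℝ => t⁻¹) _).smul_isLittleO h).congr' ?_ ?_
      · filter_upwards [self_mem_nhdsWithin] with t (ht : t ≠ 0)
        simp [sum_range_succ' _ (s + 1), hc0, smul_sum, smul_smul, pow_succ', ht]
      · filter_upwards [self_mem_nhdsWithin] with t (ht : t ≠ 0)
        simp [pow_succ', ht]
    rintro (_ | k) hk
    · exact hc0
    · exact ih hshift k (by omega)

lemma MeasureTheory.memLp_of_integrable_norm_pow {α β : Type*} [MeasurableSpace α]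
    {μ : Measure α} [NormedAddCommGroup β] {f : α → β} {p : ℕ}
    (hf : AEStronglyMeasurable f μ) (h : Integrable (fun x => ‖f x‖ ^ p) μ) : MemLp f p μ := by
  rcases eq_or_ne p 0 with rfl | hp
  · simpa using hf
  · rw [← integrable_norm_rpow_iff hf (by simpa) (by simp)]
    simpa using h

section Real

variable {μ : Measure ℝ} [IsFiniteMeasure μ] {s : ℕ}

lemma charFun_sub_sum_moments_isLittleO (hμ : MemLp id s μ) :
    (fun t : ℝ => charFun μ t -
      ∑ k ∈ range (s + 1), t ^ k • (I ^ k / k ! * ((∫ x, x ^ k ∂μ : ℝ) : ℂ)))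
      =o[𝓝 0] fun t => t ^ s := by
  have h := taylor_isLittleO_univ (x₀ := 0) (contDiff_charFun hμ)
  simp only [sub_zero, taylorWithinEval_charFun_zero hμ] at h
  refine h.congr_left fun t => congrArg _ (sum_congr rfl fun k _ => ?_)
  rw [Complex.real_smul, Complex.ofReal_pow, mul_pow]
  ring

theorem integral_pow_eq_of_charFun_sub_le {ν : ℕ → Measure ℝ} [∀ n, IsFiniteMeasure (ν n)]
    (hν : ∀ n, MemLp id s (ν n)) {m : ℕ → ℝ} (hνm : ∀ n, ∀ k ≤ s, ∫ x, x ^ k ∂ν n = m k)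
    (hμ : MemLp id s μ) {ε : ℕ → ℝ} (hε : Tendsto ε atTop (𝓝 0))
    (hclose : ∀ᶠ n in atTop, ∀ t ≠ 0, ‖charFun μ t - charFun (ν n) t‖ ≤ ε n * |t| ^ s) :
    ∀ k ≤ s, ∫ x, x ^ k ∂μ = m k := by
  set P : (ℕ → ℝ) → ℝ → ℂ := fun a t => ∑ k ∈ range (s + 1), t ^ k • (I ^ k / k ! * (a k : ℂ))
  have hνP (n : ℕ) : (fun t => charFun (ν n) t - P m t) =o[𝓝 0] fun t => t ^ s := by
    refine (charFun_sub_sum_moments_isLittleO (hν n)).congr_left fun t =>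
      congrArg _ (sum_congr rfl fun k hk => ?_)
    rw [hνm n k (mem_range_succ_iff.1 hk)]
  have hμP : (fun t => charFun μ t - P m t) =o[𝓝[≠] 0] fun t => t ^ s := by
    refine isLittleO_of_norm_sub_le_of_tendsto (fun n => (hνP n).mono nhdsWithin_le_nhds) hε ?_
    filter_upwards [hclose] with n hn
    filter_upwards [self_mem_nhdsWithin] with t ht
    simpa [norm_pow] using hn t ht
  have hP := hμP.sub ((charFun_sub_sum_moments_isLittleO hμ).mono nhdsWithin_le_nhds)
  have hcoeff := eq_zero_of_sum_pow_smul_isLittleO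
    (c := fun k => I ^ k / k ! * ((∫ x, x ^ k ∂μ - m k : ℝ) : ℂ)) <| hP.congr_left fun t => by
      rw [_root_.sub_sub_sub_cancel_left, ← sum_sub_distrib]
      refine sum_congr rfl fun k _ => ?_
      rw [← smul_sub, ← mul_sub, Complex.ofReal_sub]
  intro k hk
  simpa [I_ne_zero, Nat.factorial_ne_zero, sub_eq_zero] using hcoeff k hk

end Real

section InnerProductSpace

variable {E : Type*} [NormedAddCommGroup E] [InnerProductSpace ℝ E] [MeasurableSpace E]
  [BorelSpace E]

lemma charFun_map_inner (μ : Measure E) (x : E) (t : ℝ) :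
    charFun (μ.map (⟪x, ·⟫)) t = charFun μ (t • x) := by
  rw [charFun_apply, charFun_apply, integral_map (by fun_prop) (by fun_prop)]
  simp [inner_smul_right, real_inner_comm, mul_comm]

lemma MeasureTheory.MemLp.map_inner {p : ℝ≥0∞} {μ : Measure E} (hμ : MemLp id p μ) (x : E) :
    MemLp id p (μ.map (⟪x, ·⟫)) :=
  (memLp_map_measure_iff aestronglyMeasurable_id (by fun_prop)).2 ((innerSL ℝ x).comp_memLp' hμ)

lemma integral_map_inner_pow (μ : Measure E) (x : E) (k : ℕ) :
    ∫ y, y ^ k ∂μ.map (⟪x, ·⟫) = ∫ v, ⟪x, v⟫ ^ k ∂μ :=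
  integral_map (by fun_prop) (by fun_prop)

end InnerProductSpace

section MomentPoly

variable {ι : Type*} [Fintype ι]

lemma integrable_prod_pow {μ : Measure (EuclideanSpace ℝ ι)} [IsFiniteMeasure μ] {s : ℕ}
    (hμ : MemLp id s μ) {β : ι → ℕ} (hβ : ∑ i, β i ≤ s) :
    Integrable (fun v : EuclideanSpace ℝ ι => ∏ i, v i ^ β i) μ := by
  refine (hμ.mono_exponent (by exact_mod_cast hβ)).integrable_norm_pow'.mono' (by fun_prop)
    (ae_of_all _ fun v => ?_)
  rw [norm_prod, id, ← prod_pow_eq_pow_sum]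
  gcongr with i
  rw [norm_pow]
  exact pow_le_pow_left₀ (norm_nonneg _) (PiLp.norm_apply_le v i) _

variable [DecidableEq ι]

lemma inner_pow_eq_sum_piAntidiag (x v : EuclideanSpace ℝ ι) (k : ℕ) :
    ⟪x, v⟫ ^ k = ∑ β ∈ piAntidiag univ k,
      (Nat.multinomial univ β * ∏ i, x i ^ β i) * ∏ i, v i ^ β i := by
  simp only [PiLp.inner_apply, RCLike.inner_apply, conj_trivial, sum_pow_eq_sum_piAntidiag]
  refine sum_congr rfl fun β _ => ?_
  simp only [mul_pow, prod_mul_distrib]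
  ring

noncomputable def momentPoly (μ : Measure (EuclideanSpace ℝ ι)) (k : ℕ) : MvPolynomial ι ℝ :=
  ∑ β ∈ piAntidiag univ k, MvPolynomial.monomial (Finsupp.equivFunOnFinite.symm β)
    (Nat.multinomial univ β * ∫ v, ∏ i, v i ^ β i ∂μ)

variable {μ ν : Measure (EuclideanSpace ℝ ι)} {s k : ℕ}

lemma sum_le_of_mem_piAntidiag {β : ι → ℕ} (hβ : β ∈ piAntidiag univ k) (hk : k ≤ s) :
    ∑ i, β i ≤ s :=
  (mem_piAntidiag.1 hβ).1 ▸ hk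

lemma eval_momentPoly [IsFiniteMeasure μ] (hμ : MemLp id s μ) (hk : k ≤ s) (x : ι → ℝ) :
    MvPolynomial.eval x (momentPoly μ k) = ∫ v, ⟪WithLp.toLp 2 x, v⟫ ^ k ∂μ := by
  simp_rw [inner_pow_eq_sum_piAntidiag]
  rw [integral_finsetSum _ fun β hβ =>
    (integrable_prod_pow hμ (sum_le_of_mem_piAntidiag hβ hk)).const_mul _]
  simp only [momentPoly, map_sum, MvPolynomial.eval_monomial, Finsupp.prod_pow,
    Finsupp.coe_equivFunOnFinite_symm, integral_const_mul]
  exact sum_congr rfl fun β _ => by ring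

lemma coeff_momentPoly (μ : Measure (EuclideanSpace ℝ ι)) (β : ι → ℕ) :
    (momentPoly μ (∑ i, β i)).coeff (Finsupp.equivFunOnFinite.symm β)
      = Nat.multinomial univ β * ∫ v, ∏ i, v i ^ β i ∂μ := by
  rw [momentPoly, MvPolynomial.coeff_sum, sum_eq_single β]
  · rw [MvPolynomial.coeff_monomial, if_pos rfl]
  · intro γ _ hγ
    rw [MvPolynomial.coeff_monomial, if_neg (Finsupp.equivFunOnFinite.symm.injective.ne hγ)]
  · intro hβ
    exact absurd (mem_piAntidiag.2 ⟨rfl, fun i _ => mem_univ i⟩) hβ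

lemma momentPoly_congr (h : ∀ β : ι → ℕ, ∑ i, β i ≤ s →
      ∫ v, ∏ i, v i ^ β i ∂μ = ∫ v, ∏ i, v i ^ β i ∂ν) (hk : k ≤ s) :
    momentPoly μ k = momentPoly ν k :=
  sum_congr rfl fun β hβ => by rw [h β (sum_le_of_mem_piAntidiag hβ hk)]

lemma integral_inner_pow_eq_of_integral_prod_pow_eq [IsFiniteMeasure μ] [IsFiniteMeasure ν]
    (hμ : MemLp id s μ) (hν : MemLp id s ν)
    (h : ∀ β : ι → ℕ, ∑ i, β i ≤ s → ∫ v, ∏ i, v i ^ β i ∂μ = ∫ v, ∏ i, v i ^ β i ∂ν)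
    (hk : k ≤ s) (x : EuclideanSpace ℝ ι) :
    ∫ v, ⟪x, v⟫ ^ k ∂μ = ∫ v, ⟪x, v⟫ ^ k ∂ν := by
  rw [← WithLp.toLp_ofLp (p := 2) x, ← eval_momentPoly hμ hk, ← eval_momentPoly hν hk,
    momentPoly_congr h hk]

lemma integral_prod_pow_eq_of_integral_inner_pow_eq [IsFiniteMeasure μ] [IsFiniteMeasure ν]
    (hμ : MemLp id s μ) (hν : MemLp id s ν) {β : ι → ℕ} (hβ : ∑ i, β i ≤ s)
    (h : ∀ x : EuclideanSpace ℝ ι, ∫ v, ⟪x, v⟫ ^ (∑ i, β i) ∂μ = ∫ v, ⟪x, v⟫ ^ (∑ i, β i) ∂ν) :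
    ∫ v, ∏ i, v i ^ β i ∂μ = ∫ v, ∏ i, v i ^ β i ∂ν := by
  have hpoly : momentPoly μ (∑ i, β i) = momentPoly ν (∑ i, β i) :=
    MvPolynomial.funext fun x => by rw [eval_momentPoly hμ hβ, eval_momentPoly hν hβ, h]
  have hcoeff := congrArg (MvPolynomial.coeff (Finsupp.equivFunOnFinite.symm β)) hpoly
  rw [coeff_momentPoly, coeff_momentPoly] at hcoeff
  exact mul_left_cancel₀ (Nat.cast_ne_zero.2 (Nat.multinomial_pos _ _).ne') hcoeff

end MomentPoly

section Fourier

variable {N : ℕ}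

lemma charFun'_eq_charFun_neg (μ : Measure (EuclideanSpace ℝ (Fin N)))
    (x : EuclideanSpace ℝ (Fin N)) : charFun' μ x = charFun μ (-x) := by
  simp [charFun', charFun_apply, real_inner_comm]

lemma norm_charFun'_sub_le_dFourier {μ ν : Measure (EuclideanSpace ℝ (Fin N))}
    [IsProbabilityMeasure μ] [IsProbabilityMeasure ν] {s : ℝ} (h : dFourier s μ ν ≠ ⊤)
    (x : EuclideanSpace ℝ (Fin N)) :
    ‖charFun' μ x - charFun' ν x‖ ≤ (dFourier s μ ν).toReal * ‖x‖ ^ s := by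
  rcases eq_or_ne x 0 with rfl | hx
  · simp only [charFun'_eq_charFun_neg, neg_zero, charFun_zero, probReal_univ, sub_self,
      norm_zero]
    positivity
  have hxs : 0 < ‖x‖ ^ s := Real.rpow_pos_of_pos (norm_pos_iff.2 hx) s
  rw [← div_le_iff₀ hxs, ← ENNReal.ofReal_le_iff_le_toReal h]
  exact le_iSup₂ (f := fun x (_ : x ≠ 0) =>
    ENNReal.ofReal (‖charFun' μ x - charFun' ν x‖ / ‖x‖ ^ s)) x hx

theorem integral_inner_pow_eq_of_tendsto_dFourier {s : ℕ}
    {μ : ℕ → Measure (EuclideanSpace ℝ (Fin N))} [∀ n, IsProbabilityMeasure (μ n)]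
    (hμ : ∀ n, MemLp id s (μ n)) {μlim : Measure (EuclideanSpace ℝ (Fin N))}
    [IsProbabilityMeasure μlim] (hlim : MemLp id s μlim)
    (hconv : Tendsto (fun n => dFourier s (μ n) μlim) atTop (𝓝 0))
    (x : EuclideanSpace ℝ (Fin N)) {m : ℕ → ℝ}
    (hμm : ∀ n, ∀ k ≤ s, ∫ v, ⟪x, v⟫ ^ k ∂μ n = m k) :
    ∀ k ≤ s, ∫ v, ⟪x, v⟫ ^ k ∂μlim = m k := by
  simp_rw [← integral_map_inner_pow] at hμm ⊢
  have hε : Tendsto (fun n => (dFourier s (μ n) μlim).toReal * ‖x‖ ^ s) atTop (𝓝 0) := by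
    simpa using ((ENNReal.tendsto_toReal zero_ne_top).comp hconv).mul_const (‖x‖ ^ s)
  refine integral_pow_eq_of_charFun_sub_le (fun n => (hμ n).map_inner x) hμm (hlim.map_inner x)
    hε ?_
  filter_upwards [hconv.eventually_ne zero_ne_top] with n hn t _
  have := norm_charFun'_sub_le_dFourier hn (-(t • x))
  rw [charFun'_eq_charFun_neg, charFun'_eq_charFun_neg, neg_neg, norm_sub_rev] at this
  rw [charFun_map_inner, charFun_map_inner]
  simpa [norm_smul, mul_pow, mul_comm, mul_left_comm] using this

end Fourier

theorem moments_of_dFourier_limit_general (N : ℕ) (s : ℕ)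
    (M : (Fin N → ℕ) → ℝ)
    (μ : ℕ → Measure (EuclideanSpace ℝ (Fin N)))
    (hprob : ∀ n, IsProbabilityMeasure (μ n))
    (hmom_fin : ∀ n, Integrable (fun v => ‖v‖ ^ s) (μ n))
    (hmom_eq : ∀ n, ∀ β : Fin N → ℕ, (∑ i, β i) ≤ s →
      ∫ v, ∏ i, (v i) ^ (β i) ∂(μ n) = M β)
    (μlim : Measure (EuclideanSpace ℝ (Fin N)))
    (hlimprob : IsProbabilityMeasure μlim)
    (hlimfin : Integrable (fun v => ‖v‖ ^ s) μlim)
    (hconv : Tendsto (fun n => dFourier (s : ℝ) (μ n) μlim) atTop (𝓝 0)) :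
    ∀ β : Fin N → ℕ, (∑ i, β i) ≤ s →
      ∫ v, ∏ i, (v i) ^ (β i) ∂μlim = M β := by
  intro β hβ
  have hμ (n : ℕ) : MemLp id s (μ n) :=
    memLp_of_integrable_norm_pow aestronglyMeasurable_id (hmom_fin n)
  have hlim : MemLp id s μlim := memLp_of_integrable_norm_pow aestronglyMeasurable_id hlimfin
  have hinner (x : EuclideanSpace ℝ (Fin N)) :
      ∀ k ≤ s, ∫ v, ⟪x, v⟫ ^ k ∂μlim = ∫ v, ⟪x, v⟫ ^ k ∂μ 0 :=
    integral_inner_pow_eq_of_tendsto_dFourier hμ hlim hconv x fun n _ hk =>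
      integral_inner_pow_eq_of_integral_prod_pow_eq (hμ n) (hμ 0)
        (fun γ hγ => (hmom_eq n γ hγ).trans (hmom_eq 0 γ hγ).symm) hk x
  rw [← hmom_eq 0 β hβ]
  exact integral_prod_pow_eq_of_integral_inner_pow_eq hlim (hμ 0) hβ fun x => hinner x _ hβ

/-- If probability measures μ_n all have moments M_β up to order s and
d_s(μ_n, μ) → 0 where μ has finite absolute moments up to order s, then μ has
the same moments M_β up to order s. -/
theorem moments_of_dFourier_limit (N : ℕ) (hN : 1 ≤ N) (s : ℕ) (hs : 1 ≤ s)
    (M : (Fin N → ℕ) → ℝ)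
    (μ : ℕ → Measure (EuclideanSpace ℝ (Fin N)))
    (hprob : ∀ n, IsProbabilityMeasure (μ n))
    (hmom_fin : ∀ n, Integrable (fun v => ‖v‖ ^ s) (μ n))
    (hmom_eq : ∀ n, ∀ β : Fin N → ℕ, (∑ i, β i) ≤ s →
      ∫ v, ∏ i, (v i) ^ (β i) ∂(μ n) = M β)
    (μlim : Measure (EuclideanSpace ℝ (Fin N)))
    (hlimprob : IsProbabilityMeasure μlim)
    (hlimfin : Integrable (fun v => ‖v‖ ^ s) μlim)
    (hconv : Tendsto (fun n => dFourier (s : ℝ) (μ n) μlim) atTop (𝓝 0)) :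
    ∀ β : Fin N → ℕ, (∑ i, β i) ≤ s →
      ∫ v, ∏ i, (v i) ^ (β i) ∂μlim = M β :=
  moments_of_dFourier_limit_general N s M μ hprob hmom_fin hmom_eq μlim hlimprob hlimfin hconv
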